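/- arXiv:1012.2538 — 9 statements merged into one kernel-verified Lean document; each statement's English description precedes it below -/
import Mathlib

section
/- A commutative ring R is a PF-ring (every principal ideal is flat) if and only if for all elements s, x in R with s*x = 0, there exists α in the annihilator of s such that x = α*x. -/
/-!
The principal ideal `(s)` is isomorphic to `R ⧸ (0 : s)`, so `R` is a PF-ring iff every
annihilator ideal `I = (0 : s)` is pure, i.e. `R ⧸ I` is flat. For a pure ideal,
`I ⊓ (x) = I * (x)` yields `y ∈ I` with `x = x * y` whenever `x ∈ I`. Conversely such `y` put
every `x ∈ I ⊓ J` into `I * J`, and `I ⊓ J = I * J` for all finitely generated `J` is the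
ideal-theoretic flatness criterion for `R ⧸ I`.
-/

/-- A commutative ring is a PF-ring if every principal ideal is flat. -/
def IsPFRing (R : Type*) [CommRing R] : Prop :=
  ∀ a : R, Module.Flat R (Ideal.span {a})

namespace Ideal

variable {R : Type*} [CommRing R]

theorem pure_iff_forall_exists_eq_mul {I : Ideal R} :
    I.Pure ↔ ∀ x ∈ I, ∃ y ∈ I, x = x * y := by
  refine ⟨fun _ x hx ↦ exists_eq_mul_of_pure hx, fun h ↦ Pure.of_inf_eq_mul I fun J _ ↦ ?_⟩
  refine le_antisymm (fun x ⟨hxI, hxJ⟩ ↦ ?_) mul_le_inf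
  obtain ⟨y, hyI, hxy⟩ := h x hxI
  rw [hxy]
  exact mul_mem_mul_rev hyI hxJ

theorem flat_span_singleton_iff_pure_torsionOf (a : R) :
    Module.Flat R (span {a}) ↔ (torsionOf R R a).Pure :=
  (Module.Flat.equiv_iff (quotTorsionOfEquivSpanSingleton R R a)).symm

end Ideal

theorem isPFRing_iff_forall_pure_torsionOf (R : Type*) [CommRing R] :
    IsPFRing R ↔ ∀ a : R, (Ideal.torsionOf R R a).Pure :=
  forall_congr' Ideal.flat_span_singleton_iff_pure_torsionOf

theorem pf_iff_annihilator_condition (R : Type*) [CommRing R] :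
    IsPFRing R ↔ ∀ s x : R, s * x = 0 → ∃ α : R, α * s = 0 ∧ x = α * x := by
  simp only [isPFRing_iff_forall_pure_torsionOf, Ideal.pure_iff_forall_exists_eq_mul,
    Ideal.mem_torsionOf_iff, smul_eq_mul]
  refine forall_congr' fun s ↦ forall_congr' fun x ↦ ?_
  rw [mul_comm x s]
  simp_rw [mul_comm x]
end

section
/- In a commutative ring R, every ideal is P-flat if and only if every principal ideal is P-flat. -/
/-- An `R`-module `M` is P-flat if whenever `s • x = 0`, `x ∈ (0 : s) M`. -/
def IsPFlat (R : Type*) [CommRing R] (M : Type*) [AddCommGroup M] [Module R M] : Prop :=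
  ∀ (s : R) (x : M), s • x = 0 → x ∈ (Ideal.span {s}).annihilator • (⊤ : Submodule R M)

theorem IsPFlat.of_forall_mem_le {R M : Type*} [CommRing R] [AddCommGroup M] [Module R M]
    {N : Submodule R M} (h : ∀ x ∈ N, ∃ N' ≤ N, x ∈ N' ∧ IsPFlat R N') : IsPFlat R N := by
  intro s x hsx
  obtain ⟨N', hle, hxN', hN'⟩ := h x x.2
  have hsx' : s • (⟨x, hxN'⟩ : N') = 0 :=
    Subtype.ext (by simpa using congrArg Subtype.val hsx)
  exact Submodule.smul_top_le_comap_smul_top _ (Submodule.inclusion hle) (hN' s _ hsx')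

theorem every_ideal_pflat_iff_every_principal_ideal_pflat (R : Type*) [CommRing R] :
    (∀ I : Ideal R, IsPFlat R I) ↔ (∀ a : R, IsPFlat R (Ideal.span {a})) :=
  ⟨fun h _ => h _, fun h _ => IsPFlat.of_forall_mem_le fun x hx =>
    ⟨Ideal.span {x}, Ideal.span_singleton_le_iff_mem _ |>.mpr hx, Ideal.mem_span_singleton_self x,
      h x⟩⟩
end

section
/- If every principal ideal of a commutative ring R is P-flat, then every principal ideal of R is flat. -/
section Cyclic

variable {R M : Type*} [CommRing R] [AddCommGroup M] [Module R M]

theorem Submodule.span_singleton_mk_self_eq_top (m : M) :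
    R ∙ (⟨m, Submodule.mem_span_singleton_self m⟩ : R ∙ m) = ⊤ := by
  refine (Submodule.span_singleton_eq_top_iff _ _).mpr fun ⟨x, hx⟩ => ?_
  obtain ⟨r, rfl⟩ := Submodule.mem_span_singleton.mp hx
  exact ⟨r, rfl⟩

variable {m : M}

theorem IsPFlat.exists_mul_eq_zero_smul_eq_self (hM : IsPFlat R M) (hm : R ∙ m = ⊤) {s : R}
    (hs : s • m = 0) : ∃ u : R, u * s = 0 ∧ u • m = m := by
  have hmem := hM s m hs
  rw [← hm, Submodule.mem_smul_span_singleton] at hmem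
  obtain ⟨u, hu, hum⟩ := hmem
  exact ⟨u, (Submodule.mem_annihilator_span_singleton s u).mp hu, hum⟩

theorem Module.Flat.of_span_singleton_eq_top (hm : R ∙ m = ⊤)
    (hu : ∀ s : R, s • m = 0 → ∃ u : R, u * s = 0 ∧ u • m = m) : Module.Flat R M := by
  refine Module.Flat.of_forall_isTrivialRelation fun {l f x} hfx => ?_
  choose c hc using fun i => (Submodule.span_singleton_eq_top_iff R m).mp hm (x i)
  obtain ⟨u, hus, hum⟩ := hu (∑ i, f i * c i) <| by
    simpa only [Finset.sum_smul, mul_smul, hc] using hfx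
  refine ⟨1, fun i _ => c i * u, fun _ => m, fun i => ?_, fun _ => ?_⟩
  · simp only [Finset.univ_unique, Finset.sum_singleton, mul_smul, hum, hc]
  · simpa only [← mul_assoc, ← Finset.sum_mul, mul_comm u] using hus

end Cyclic

theorem principal_pflat_imp_principal_flat (R : Type*) [CommRing R]
    (h : ∀ a : R, IsPFlat R (Ideal.span {a})) :
    ∀ a : R, Module.Flat R (Ideal.span {a}) := fun a =>
  have hgen := Submodule.span_singleton_mk_self_eq_top a
  .of_span_singleton_eq_top hgen fun _ => (h a).exists_mul_eq_zero_smul_eq_self hgen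
end

section
/- If R is a PF-ring (every principal ideal is flat), then for every multiplicative subset S of R, the localization S⁻¹R is also a PF-ring. -/
namespace IsLocalization

variable {R : Type*} [CommSemiring R] {A : Type*} [CommSemiring A] [Algebra R A]

theorem span_singleton_mk' (M : Submonoid R) [IsLocalization M A] (r : R) (s : M) :
    Ideal.span {mk' A r s} = (Ideal.span {r}).map (algebraMap R A) := by
  have hs : IsUnit (mk' A (1 : R) s) := IsUnit.of_mul_eq_one _ (by rw [mk'_spec, map_one])
  rw [mk'_eq_mul_mk'_one, Ideal.span_singleton_mul_right_unit hs, Ideal.map_span,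
    Set.image_singleton]

theorem flat_map_ideal (M : Submonoid R) [IsLocalization M A] (I : Ideal R) [Module.Flat R I] :
    Module.Flat A (I.map (algebraMap R A)) := by
  rw [← Ideal.localized'_eq_map A M]
  exact Module.Flat.of_isLocalizedModule A M (I.toLocalized' A M (Algebra.linearMap R A))

end IsLocalization

theorem IsPFRing.of_isLocalization {R : Type*} [CommRing R] (M : Submonoid R)
    (A : Type*) [CommRing A] [Algebra R A] [IsLocalization M A] (h : IsPFRing R) :
    IsPFRing A := by
  intro a
  obtain ⟨⟨r, s⟩, rfl⟩ := IsLocalization.mk'_surjective M a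
  have := h r
  rw [IsLocalization.span_singleton_mk' M]
  exact IsLocalization.flat_map_ideal M _

theorem localization_isPFRing (R : Type*) [CommRing R] (S : Submonoid R)
    (h : IsPFRing R) : IsPFRing (Localization S) :=
  h.of_isLocalization S (Localization S)
end

section
/- A product ring R₁ × R₂ of commutative rings is a PF-ring if and only if both R₁ and R₂ are PF-rings. -/
namespace Ideal

variable {R : Type*} [CommRing R] {x : R}

theorem exists_mul_eq_zero_and_mul_eq_self_of_flat_span_singleton
    [Module.Flat R (span {x})] {s : R} (hs : s * x = 0) :
    ∃ α : R, α * s = 0 ∧ α * x = x := by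
  let g : span {x} := ⟨x, mem_span_singleton_self x⟩
  have hrel : ∑ _ : Unit, s • g = 0 := Subtype.ext (by simpa [g] using hs)
  obtain ⟨k, a, y, hg, ha⟩ := Module.Flat.isTrivialRelation_of_sum_smul_eq_zero hrel
  choose c hc using fun j ↦ mem_span_singleton'.mp (y j).2
  refine ⟨∑ j, a () j * c j, ?_, ?_⟩
  · simp only [Finset.univ_unique, Finset.sum_singleton] at ha
    refine Finset.sum_mul .. |>.trans <| Finset.sum_eq_zero fun j _ ↦ ?_
    linear_combination c j * ha j
  · have hx : x = ∑ j, a () j * y j := by simpa [g] using congrArg Subtype.val (hg ())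
    simp only [Finset.sum_mul, mul_assoc, hc]
    exact hx.symm

theorem flat_span_singleton_of_forall_exists
    (h : ∀ s : R, s * x = 0 → ∃ α : R, α * s = 0 ∧ α * x = x) :
    Module.Flat R (span {x}) := by
  refine Module.Flat.of_forall_isTrivialRelation fun {l f m} hfm ↦ ?_
  choose c hc using fun i ↦ mem_span_singleton'.mp (m i).2
  have hsx : (∑ i, f i * c i) * x = 0 := by
    simpa [Finset.sum_mul, mul_assoc, hc] using congrArg Subtype.val hfm
  obtain ⟨α, hαs, hαx⟩ := h _ hsx
  refine ⟨1, fun i _ ↦ c i * α, fun _ ↦ ⟨x, mem_span_singleton_self x⟩, fun i ↦ ?_, fun _ ↦ ?_⟩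
  · ext
    simp [mul_assoc, hαx, hc]
  · simpa [Finset.mul_sum, mul_comm, mul_left_comm] using hαs

theorem flat_span_singleton_iff :
    Module.Flat R (span {x}) ↔ ∀ s : R, s * x = 0 → ∃ α : R, α * s = 0 ∧ α * x = x :=
  ⟨fun _ _ ↦ exists_mul_eq_zero_and_mul_eq_self_of_flat_span_singleton,
    flat_span_singleton_of_forall_exists⟩

end Ideal

theorem isPFRing_iff {R : Type*} [CommRing R] :
    IsPFRing R ↔ ∀ s x : R, s * x = 0 → ∃ α : R, α * s = 0 ∧ α * x = x :=
  (forall_congr' fun _ ↦ Ideal.flat_span_singleton_iff).trans forall_comm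

theorem prod_isPFRing_iff (R₁ R₂ : Type*) [CommRing R₁] [CommRing R₂] :
    IsPFRing (R₁ × R₂) ↔ IsPFRing R₁ ∧ IsPFRing R₂ := by
  simp only [isPFRing_iff]
  constructor
  · intro h
    refine ⟨fun s x hsx ↦ ?_, fun s x hsx ↦ ?_⟩
    · obtain ⟨α, hαs, hαx⟩ := h (s, 0) (x, 0) (by simp [hsx])
      exact ⟨α.1, by simpa using congrArg Prod.fst hαs, by simpa using congrArg Prod.fst hαx⟩
    · obtain ⟨α, hαs, hαx⟩ := h (0, s) (0, x) (by simp [hsx])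
      exact ⟨α.2, by simpa using congrArg Prod.snd hαs, by simpa using congrArg Prod.snd hαx⟩
  · rintro ⟨h₁, h₂⟩ ⟨s₁, s₂⟩ ⟨x₁, x₂⟩ hsx
    obtain ⟨hsx₁, hsx₂⟩ := Prod.ext_iff.mp hsx
    obtain ⟨α₁, hαs₁, hαx₁⟩ := h₁ s₁ x₁ hsx₁
    obtain ⟨α₂, hαs₂, hαx₂⟩ := h₂ s₂ x₂ hsx₂
    exact ⟨(α₁, α₂), Prod.ext hαs₁ hαs₂, Prod.ext hαx₁ hαx₂⟩
end

section
/- A commutative ring R is a PF-ring if and only if for every maximal ideal m of R, the localization R_m is an integral domain. -/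
/-!
Since `Ideal.span {a} ≅ R ⧸ Ann(a)`, the ideal `(a)` is flat iff `Ann(a)` is pure, i.e. every
`x ∈ Ann(a)` satisfies `x = x y` for some `y ∈ Ann(a)`. Writing `1 = y + (1 - y)`, this says that
`x a = 0` forces `Ann(a) + Ann(x) = R`. On the other hand `R_m` is a domain iff `x a = 0` forces
`x` or `a` to vanish in `R_m`, i.e. `Ann(x) ⊄ m` or `Ann(a) ⊄ m`; and an ideal is `R` iff it lies in
no maximal ideal.
-/

section

variable {R : Type*} [CommRing R]

theorem Ideal.pure_iff_forall_exists_eq_mul_s6 {I : Ideal R} :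
    I.Pure ↔ ∀ x ∈ I, ∃ y ∈ I, x = x * y := by
  refine ⟨fun _ _ hx ↦ Ideal.exists_eq_mul_of_pure hx, fun h ↦ ?_⟩
  refine Ideal.Pure.of_inf_eq_mul I fun J _ ↦ le_antisymm ?_ Ideal.mul_le_inf
  rintro x ⟨hxI, hxJ⟩
  obtain ⟨y, hyI, hxy⟩ := h x hxI
  rw [hxy, mul_comm x y]
  exact Ideal.mul_mem_mul hyI hxJ

theorem Module.flat_span_singleton_iff_pure (a : R) :
    Module.Flat R (Ideal.span {a}) ↔ (Ideal.torsionOf R R a).Pure :=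
  (Module.Flat.equiv_iff (Ideal.quotTorsionOfEquivSpanSingleton R R a)).symm

theorem isPFRing_iff_torsionOf_sup_eq_top :
    IsPFRing R ↔ ∀ a b : R, a * b = 0 → Ideal.torsionOf R R a ⊔ Ideal.torsionOf R R b = ⊤ := by
  simp only [IsPFRing, Module.flat_span_singleton_iff_pure, Ideal.pure_iff_forall_exists_eq_mul_s6,
    Ideal.mem_torsionOf_iff, smul_eq_mul]
  refine ⟨fun h a b hab ↦ ?_, fun h b a hab ↦ ?_⟩
  · obtain ⟨y, hyb, hay⟩ := h b a hab
    rw [Ideal.eq_top_iff_one, ← sub_add_cancel 1 y]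
    refine Submodule.add_mem_sup ((Ideal.mem_torsionOf_iff _ _).2 ?_)
      ((Ideal.mem_torsionOf_iff _ _).2 hyb)
    linear_combination hay
  · obtain ⟨z, hz, y, hy, hzy⟩ :=
      Submodule.mem_sup.1 ((h a b hab).symm ▸ Submodule.mem_top (x := 1))
    rw [Ideal.mem_torsionOf_iff, smul_eq_mul] at hz hy
    exact ⟨y, hy, by linear_combination hz - a * hzy⟩

theorem IsLocalization.noZeroDivisors_iff (M : Submonoid R) (S : Type*) [CommRing S] [Algebra R S]
    [IsLocalization M S] :
    NoZeroDivisors S ↔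
      ∀ a b : R, a * b = 0 → algebraMap R S a = 0 ∨ algebraMap R S b = 0 := by
  refine ⟨fun _ a b hab ↦ mul_eq_zero.1 (by rw [← map_mul, hab, map_zero]), fun h ↦ ⟨?_⟩⟩
  intro X Y hXY
  obtain ⟨⟨x, s⟩, rfl⟩ := IsLocalization.mk'_surjective M X
  obtain ⟨⟨y, t⟩, rfl⟩ := IsLocalization.mk'_surjective M Y
  rw [← IsLocalization.mk'_mul, IsLocalization.mk'_eq_zero_iff] at hXY
  obtain ⟨u, hu⟩ := hXY
  simp only [IsLocalization.mk'_eq_zero_iff, ← IsLocalization.map_eq_zero_iff M S]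
  rcases h (u * x) y (by rw [← hu]; ring) with hux | hy
  · left
    rwa [map_mul, (IsLocalization.map_units S u).mul_right_eq_zero] at hux
  · exact Or.inr hy

theorem IsLocalization.AtPrime.algebraMap_eq_zero_iff (p : Ideal R) [p.IsPrime] (S : Type*)
    [CommRing S] [Algebra R S] [IsLocalization.AtPrime S p] (a : R) :
    algebraMap R S a = 0 ↔ ¬ Ideal.torsionOf R R a ≤ p := by
  rw [IsLocalization.map_eq_zero_iff p.primeCompl, SetLike.not_le_iff_exists]
  simp [Ideal.primeCompl, Ideal.mem_torsionOf_iff, and_comm]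

theorem isDomain_localization_atPrime_iff (p : Ideal R) [p.IsPrime] :
    IsDomain (Localization.AtPrime p) ↔
      ∀ a b : R, a * b = 0 → ¬ Ideal.torsionOf R R a ⊔ Ideal.torsionOf R R b ≤ p := by
  rw [isDomain_iff_noZeroDivisors_and_nontrivial,
    IsLocalization.noZeroDivisors_iff p.primeCompl]
  simp only [IsLocalization.AtPrime.algebraMap_eq_zero_iff p, sup_le_iff, not_and_or,
    and_iff_left_iff_imp]
  exact fun _ ↦ inferInstance

end

theorem isPFRing_iff_localization_at_maximal_isDomain (R : Type*) [CommRing R] :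
    IsPFRing R ↔ ∀ (m : Ideal R) (hm : m.IsMaximal),
      letI := hm.isPrime
      IsDomain (Localization.AtPrime m) := by
  rw [isPFRing_iff_torsionOf_sup_eq_top]
  refine ⟨fun h m hm ↦ ?_, fun h a b hab ↦ ?_⟩
  · have := hm.isPrime
    rw [isDomain_localization_atPrime_iff]
    exact fun a b hab hle ↦ hm.ne_top (top_le_iff.1 (h a b hab ▸ hle))
  · by_contra hne
    obtain ⟨m, hm, hle⟩ := Ideal.exists_le_maximal _ hne
    have := hm.isPrime
    exact (isDomain_localization_atPrime_iff m).1 (h m hm) a b hab hle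
end

section
/- Let R be a Dedekind domain and I = P₁^{a₁}···Pₙ^{aₙ} a nonzero proper ideal with P₁,…,Pₙ distinct nonzero prime ideals and aᵢ ≥ 1. Then R/I is a PF-ring if and only if aᵢ = 1 for all i. -/
namespace IsPFRing

variable {S : Type*} [CommRing S]

theorem isReduced (h : IsPFRing S) : IsReduced S := by
  rw [isReduced_iff_pow_one_lt 2 one_lt_two]
  intro x hx
  have := h x
  let m : Ideal.span {x} := ⟨x, Ideal.mem_span_singleton_self x⟩
  obtain ⟨k, c, y, hm, hcx⟩ := Module.Flat.isTrivialRelation_of_sum_smul_eq_zero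
    (f := fun _ : Unit ↦ x) (x := fun _ ↦ m) (Subtype.ext <| by simp [m, ← sq, hx])
  have hx_eq : x = ∑ j, c () j * y j := by simpa [m] using congrArg Subtype.val (hm ())
  rw [hx_eq]
  refine Finset.sum_eq_zero fun j _ ↦ ?_
  obtain ⟨d, hd⟩ := Ideal.mem_span_singleton'.mp (y j).2
  have hcx_j : x * c () j = 0 := by simpa using hcx j
  rw [← hd]
  linear_combination d * hcx_j

theorem of_isSemisimpleRing [IsSemisimpleRing S] : IsPFRing S := fun a ↦
  have := Module.projective_of_isSemisimpleRing S (Ideal.span {a})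
  inferInstance

end IsPFRing

section DedekindDomain

variable {R : Type*} [CommRing R] [IsDedekindDomain R]

/-- With `I = P ^ 2 * K`, the ideal `P * K` squares into `I`, so radicality forces
`P * K ≤ P ^ 2 * K`, and cancelling `P * K` leaves `P = ⊤`. -/
theorem Ideal.IsRadical.not_sq_dvd {I P : Ideal R} (hI : I.IsRadical) (hI0 : I ≠ ⊥)
    (hP : P ≠ ⊤) : ¬P ^ 2 ∣ I := by
  rintro ⟨K, rfl⟩
  have hsq : (P * K) ^ 2 ≤ P ^ 2 * K := by
    rw [mul_pow]
    exact Ideal.mul_mono_right (Ideal.pow_le_self two_ne_zero)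
  have hle : P * K ≤ P ^ 2 * K := fun x hx ↦ hI ⟨2, hsq (Ideal.pow_mem_pow hx 2)⟩
  have hPK : P * K ≠ 0 := by
    rintro hPK
    exact hI0 (by rw [sq, mul_assoc, hPK, mul_zero]; rfl)
  have hdvd : P * K * P ∣ P * K * 1 := by
    rw [mul_one, mul_right_comm, ← sq]
    exact Ideal.dvd_iff_le.mpr hle
  exact hP (Ideal.isUnit_iff.mp (isUnit_of_dvd_one ((mul_dvd_mul_iff_left hPK).mp hdvd)))

theorem IsDedekindDomain.isSemisimpleRing_quotient_prod {ι : Type*} [Fintype ι]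
    {P : ι → Ideal R} (hP : ∀ i, (P i).IsPrime) (hP0 : ∀ i, P i ≠ ⊥)
    (hPinj : Function.Injective P) : IsSemisimpleRing (R ⧸ ∏ i, P i) := by
  have e := IsDedekindDomain.quotientEquivPiOfProdEq (∏ i, P i) P 1
    (fun i ↦ (Ideal.prime_iff_isPrime (hP0 i)).mpr (hP i)) (fun _ _ hij ↦ hPinj.ne hij)
    (by simp)
  have (i : ι) : IsSemisimpleRing (R ⧸ P i ^ (1 : ι → ℕ) i) := by
    have : (P i ^ (1 : ι → ℕ) i).IsMaximal := by simpa using (hP i).isMaximal (hP0 i)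
    let := Ideal.Quotient.field (P i ^ (1 : ι → ℕ) i)
    infer_instance
  exact e.symm.isSemisimpleRing

end DedekindDomain

theorem dedekind_quotient_isPFRing_iff_general (R : Type*) [CommRing R]
    [IsDedekindDomain R] (n : ℕ) (P : Fin n → Ideal R) (hP : ∀ i, (P i).IsPrime)
    (hP0 : ∀ i, P i ≠ ⊥) (hPinj : Function.Injective P) (a : Fin n → ℕ)
    (ha : ∀ i, 1 ≤ a i) (I : Ideal R) (hI : I = ∏ i, P i ^ a i) :
    IsPFRing (R ⧸ I) ↔ ∀ i, a i = 1 := by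
  constructor
  · intro hPF i
    have hI0 : I ≠ ⊥ := hI ▸ Finset.prod_ne_zero_iff.mpr fun j _ ↦ pow_ne_zero _ (hP0 j)
    have hrad : I.IsRadical := (Ideal.isRadical_iff_quotient_reduced I).mpr hPF.isReduced
    have hdvd : P i ^ a i ∣ I := hI ▸ Finset.dvd_prod_of_mem _ (Finset.mem_univ i)
    by_contra hne
    exact hrad.not_sq_dvd hI0 (hP i).ne_top ((pow_dvd_pow _ (by have := ha i; omega)).trans hdvd)
  · intro h1
    rw [show I = ∏ i, P i by simp [hI, h1]]
    have := IsDedekindDomain.isSemisimpleRing_quotient_prod hP hP0 hPinj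
    exact IsPFRing.of_isSemisimpleRing

theorem dedekind_quotient_isPFRing_iff (R : Type*) [CommRing R] [IsDomain R]
    [IsDedekindDomain R] (n : ℕ) (P : Fin n → Ideal R) (hP : ∀ i, (P i).IsPrime)
    (hP0 : ∀ i, P i ≠ ⊥) (hPinj : Function.Injective P) (a : Fin n → ℕ)
    (ha : ∀ i, 1 ≤ a i) (I : Ideal R) (hI : I = ∏ i, P i ^ a i)
    (hIbot : I ≠ ⊥) (hItop : I ≠ ⊤) :
    IsPFRing (R ⧸ I) ↔ ∀ i, a i = 1 :=
  dedekind_quotient_isPFRing_iff_general R n P hP hP0 hPinj a ha I hI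
end

section
/- Let R be an integral domain and I a nonzero proper ideal of R. Then the amalgamated duplication R ⋈ I is not a PF-ring. -/
/-- The amalgamated duplication `R ⋈ I` as a subring of `R × R`. -/
def Ideal.duplication {R : Type*} [CommRing R] (I : Ideal R) : Subring (R × R) where
  carrier := {p | p.2 - p.1 ∈ I}
  zero_mem' := by simp
  one_mem' := by simp
  add_mem' := by
    intro a b ha hb
    show (a + b).2 - (a + b).1 ∈ I
    convert I.add_mem ha hb using 1
    simp only [Prod.fst_add, Prod.snd_add]; ring
  neg_mem' := by
    intro a ha
    show (-a).2 - (-a).1 ∈ I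
    convert I.neg_mem ha using 1
    simp only [Prod.fst_neg, Prod.snd_neg]; ring
  mul_mem' := by
    intro a b ha hb
    show (a * b).2 - (a * b).1 ∈ I
    have : (a * b).2 - (a * b).1 = a.2 * (b.2 - b.1) + b.1 * (a.2 - a.1) := by
      simp only [Prod.fst_mul, Prod.snd_mul]; ring
    rw [this]
    exact I.add_mem (I.mul_mem_left _ hb) (I.mul_mem_left _ ha)

/-- The diagonal embedding `R →+* R ⋈ I`. -/
def Ideal.duplicationDiag {R : Type*} [CommRing R] (I : Ideal R) : R →+* I.duplication where
  toFun r := ⟨(r, r), by show r - r ∈ I; simp⟩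
  map_one' := rfl
  map_mul' _ _ := rfl
  map_zero' := rfl
  map_add' _ _ := rfl

theorem Ideal.mem_duplication {R : Type*} [CommRing R] {I : Ideal R} {p : R × R} :
    p ∈ I.duplication ↔ p.2 - p.1 ∈ I :=
  Iff.rfl

theorem IsPFRing.exists_mul_eq_zero_and_mul_eq_self {A : Type*} [CommRing A] (hA : IsPFRing A)
    {s x : A} (hsx : s * x = 0) : ∃ α : A, α * s = 0 ∧ α * x = x := by
  have := hA x
  obtain ⟨k, c, y, hxy, hsc⟩ := Module.Flat.isTrivialRelation_of_sum_smul_eq_zero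
    (f := fun _ : Unit => s) (x := fun _ => (⟨x, Ideal.mem_span_singleton_self x⟩ : Ideal.span {x}))
    (Subtype.ext (by simpa using hsx))
  choose b hb using fun j => Ideal.mem_span_singleton'.mp (y j).2
  refine ⟨∑ j, c () j * b j, ?_, ?_⟩
  · rw [Finset.sum_mul]
    refine Finset.sum_eq_zero fun j _ => ?_
    have hscj : s * c () j = 0 := by simpa using hsc j
    calc c () j * b j * s = b j * (s * c () j) := by ring
      _ = 0 := by rw [hscj, mul_zero]
  · have hx := congrArg Subtype.val (hxy ())
    simp only [Submodule.coe_sum, SetLike.val_smul, smul_eq_mul, ← hb] at hx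
    calc (∑ j, c () j * b j) * x = ∑ j, c () j * (b j * x) := by
          rw [Finset.sum_mul]; exact Finset.sum_congr rfl fun j _ => mul_assoc _ _ _
      _ = x := hx.symm

theorem duplication_not_isPFRing_of_domain (R : Type*) [CommRing R] [IsDomain R]
    (I : Ideal R) (hbot : I ≠ ⊥) (htop : I ≠ ⊤) : ¬ IsPFRing I.duplication := by
  intro hPF
  obtain ⟨a, haI, ha⟩ := Submodule.exists_mem_ne_zero_of_ne_bot hbot
  obtain ⟨⟨⟨u, v⟩, huv⟩, hs, hx⟩ := hPF.exists_mul_eq_zero_and_mul_eq_self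
    (s := ⟨(a, 0), by simpa [Ideal.mem_duplication] using I.neg_mem haI⟩)
    (x := ⟨(0, a), by simpa [Ideal.mem_duplication] using haI⟩) (Subtype.ext (by simp))
  have hua : u * a = 0 := by simpa using congrArg (fun z : I.duplication => (z : R × R).1) hs
  have hva : v * a = 1 * a := by simpa using congrArg (fun z : I.duplication => (z : R × R).2) hx
  have hu : u = 0 := (mul_eq_zero.mp hua).resolve_right ha
  have hv : v = 1 := mul_right_cancel₀ ha hva
  exact htop ((I.eq_top_iff_one).mpr (by simpa [Ideal.mem_duplication, hu, hv] using huv))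
end

section
/- If every ideal of a commutative ring R is P-flat and R is arithmetical, then every finitely generated ideal of R is flat (equivalently, R has weak global dimension at most 1). -/
/-- A commutative ring is arithmetical if its lattice of ideals is distributive. -/
def IsArithmetical (R : Type*) [CommRing R] : Prop :=
  ∀ a b c : Ideal R, a ⊓ (b ⊔ c) = (a ⊓ b) ⊔ (a ⊓ c)

section

variable {R : Type*} [CommRing R]

theorem IsArithmetical.exists_mul_eq_and_one_sub_mul_eq (hA : IsArithmetical R) (a b : R) :
    ∃ r s t : R, r * a = s * b ∧ (1 - r) * b = t * a := by
  have hb : b ∈ Ideal.span {b} ⊓ (Ideal.span {a} ⊔ Ideal.span {a + b}) :=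
    ⟨Ideal.mem_span_singleton_self b, by
      simpa using sub_mem (Ideal.mem_sup_right (Ideal.mem_span_singleton_self (a + b)))
        (Ideal.mem_sup_left (Ideal.mem_span_singleton_self a))⟩
  rw [hA] at hb
  obtain ⟨u, ⟨-, hua⟩, v, ⟨hvb, hvab⟩, huv⟩ := Submodule.mem_sup.mp hb
  obtain ⟨t, rfl⟩ := Ideal.mem_span_singleton'.mp hua
  obtain ⟨w, hw⟩ := Ideal.mem_span_singleton'.mp hvb
  obtain ⟨r, hr⟩ := Ideal.mem_span_singleton'.mp hvab
  exact ⟨r, w - r, t + r, by linear_combination hr - hw, by linear_combination -huv - hr⟩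

theorem IsPFlat.exists_mul_eq_zero_and_mul_eq_self {s x : R} (hP : IsPFlat R (Ideal.span {x}))
    (h : s * x = 0) : ∃ e : R, e * s = 0 ∧ e * x = x := by
  have hx := Ideal.mem_span_singleton_self x
  have hann := hP s ⟨x, hx⟩ (Subtype.ext (by simpa [mul_comm] using h))
  replace hann := Submodule.mem_map_of_mem (f := (Ideal.span {x}).subtype) hann
  rw [Submodule.map_smul'', Submodule.map_subtype_top, Ideal.smul_eq_mul,
    Ideal.mem_mul_span_singleton] at hann
  obtain ⟨e, he, hex⟩ := hann
  exact ⟨e, by simpa using Submodule.mem_annihilator.mp he s (Ideal.mem_span_singleton_self s),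
    hex⟩

theorem IsLocalization.exists_associated_algebraMap (M : Submonoid R) {S : Type*} [CommRing S]
    [Algebra R S] [IsLocalization M S] (z : S) : ∃ a : R, Associated (algebraMap R S a) z := by
  obtain ⟨⟨a, m⟩, h⟩ := IsLocalization.surj M z
  exact ⟨a, h ▸ (associated_mul_unit_right z _ (IsLocalization.map_units S m)).symm⟩

namespace Localization.AtPrime

variable (P : Ideal R) [P.IsPrime]

theorem isUnit_algebraMap_or_isUnit_algebraMap_one_sub (r : R) :
    IsUnit (algebraMap R (Localization.AtPrime P) r) ∨
      IsUnit (algebraMap R (Localization.AtPrime P) (1 - r)) := by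
  rw [map_sub, map_one]
  exact IsLocalRing.isUnit_or_isUnit_one_sub_self _

theorem isDomain_of_isPFlat (hP : ∀ x : R, IsPFlat R (Ideal.span {x})) :
    IsDomain (Localization.AtPrime P) := by
  have : NoZeroDivisors (Localization.AtPrime P) := by
    refine ⟨fun {z w} hzw ↦ ?_⟩
    obtain ⟨a, ha⟩ := IsLocalization.exists_associated_algebraMap P.primeCompl z
    obtain ⟨b, hb⟩ := IsLocalization.exists_associated_algebraMap P.primeCompl w
    rw [← ha.eq_zero_iff, ← hb.eq_zero_iff]
    have hab : algebraMap R (Localization.AtPrime P) (a * b) = 0 := by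
      rw [map_mul, (ha.mul_mul hb).eq_zero_iff, hzw]
    obtain ⟨m, hm⟩ := (IsLocalization.map_eq_zero_iff P.primeCompl _ _).mp hab
    obtain ⟨e, hea, heb⟩ :=
      (hP b).exists_mul_eq_zero_and_mul_eq_self (s := m * a) ((mul_assoc _ _ _).trans hm)
    have hm_unit := IsLocalization.map_units (Localization.AtPrime P) m
    rcases isUnit_algebraMap_or_isUnit_algebraMap_one_sub P e with he | he
    · left
      have := congrArg (algebraMap R (Localization.AtPrime P)) hea
      rwa [map_zero, map_mul, map_mul, he.mul_right_eq_zero, hm_unit.mul_right_eq_zero] at this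
    · right
      have := congrArg (algebraMap R (Localization.AtPrime P)) (sub_eq_zero.mpr heb.symm)
      rwa [← one_sub_mul, map_zero, map_mul, he.mul_right_eq_zero] at this
  exact NoZeroDivisors.to_isDomain _

theorem preValuationRing_of_isArithmetical (hA : IsArithmetical R) :
    PreValuationRing (Localization.AtPrime P) := by
  refine PreValuationRing.iff_dvd_total.mpr ⟨fun z w ↦ ?_⟩
  obtain ⟨a, ha⟩ := IsLocalization.exists_associated_algebraMap P.primeCompl z
  obtain ⟨b, hb⟩ := IsLocalization.exists_associated_algebraMap P.primeCompl w
  rw [← ha.dvd_iff_dvd_left, ← ha.dvd_iff_dvd_right, ← hb.dvd_iff_dvd_left,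
    ← hb.dvd_iff_dvd_right]
  obtain ⟨r, s, t, hras, hrbt⟩ := hA.exists_mul_eq_and_one_sub_mul_eq a b
  rcases isUnit_algebraMap_or_isUnit_algebraMap_one_sub P r with hr | hr
  · right
    rw [← hr.dvd_mul_left, ← map_mul, hras, map_mul]
    exact dvd_mul_left _ _
  · left
    rw [← hr.dvd_mul_left, ← map_mul, hrbt, map_mul]
    exact dvd_mul_left _ _

end Localization.AtPrime

theorem Ideal.flat_of_valuationRing_localization_isMaximal
    (hdom : ∀ (P : Ideal R) [P.IsMaximal], IsDomain (Localization.AtPrime P))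
    (hval : ∀ (P : Ideal R) [P.IsMaximal], PreValuationRing (Localization.AtPrime P))
    (I : Ideal R) : Module.Flat R I := by
  refine Module.flat_of_isLocalized_maximal (M := I) R
    (fun P _ ↦ I.localized' (Localization.AtPrime P) P.primeCompl
      (Algebra.linearMap R (Localization.AtPrime P)))
    (fun P _ ↦ I.toLocalized' (Localization.AtPrime P) P.primeCompl
      (Algebra.linearMap R (Localization.AtPrime P)))
    fun P _ ↦ ?_
  have := hdom P
  have : ValuationRing (Localization.AtPrime P) := { toPreValuationRing := hval P }
  have : Module.Flat (Localization.AtPrime P) (I.localized' (Localization.AtPrime P)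
      P.primeCompl (Algebra.linearMap R (Localization.AtPrime P))) := by
    rw [Module.Flat.flat_iff_torsion_eq_bot_of_isBezout,
      ← Submodule.isTorsionFree_iff_torsion_eq_bot]
    infer_instance
  exact Module.Flat.trans R (Localization.AtPrime P) _

end

theorem fg_ideal_flat_of_pflat_arithmetical (R : Type*) [CommRing R]
    (hP : ∀ I : Ideal R, IsPFlat R I) (hA : IsArithmetical R) :
    ∀ I : Ideal R, I.FG → Module.Flat R I := fun I _ ↦
  Ideal.flat_of_valuationRing_localization_isMaximal
    (fun P _ ↦ Localization.AtPrime.isDomain_of_isPFlat P fun _ ↦ hP _)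
    (fun P _ ↦ Localization.AtPrime.preValuationRing_of_isArithmetical P hA) I
end
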